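/- Let a and c be real numbers with 0 < a < c. Then (4π/c)·( 2c² E(a/c) − (c² − a²) K(a/c) ) = 4π(a + c)·E( 2√(ac)/(a + c) ). Equivalently, S(0,a,c) = 4π(a+c) E(2√(ac)/(a+c)), so the area of the generalized Lawson surface T_{a,0,c} agrees with the area of the corresponding bipolar Lawson surface. -/

import Mathlib

/-!
The identity is the ascending Landen transformation
`(1 + k) E(2√k/(1+k)) = 2E(k) - (1 - k²)K(k)`, applied with `k = a/c`.

To prove it, substitute `sin φ = (1 + k) sin θ / (1 + k sin² θ)` in `E(k₁)`, `k₁ = 2√k/(1+k)`.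
This maps `[0, π/2]` onto itself, and with `Δ = √(1 - k² sin² θ)` one has
`√(1 - k₁² sin² φ) = (1 - k sin² θ)/(1 + k sin² θ)` and
`dφ/dθ = (1 + k)(1 - k sin² θ)/((1 + k sin² θ) Δ)`.
The pulled-back integrand, multiplied by `1 + k`, differs from `2Δ - (1 - k²)/Δ` by the derivative
of `2k sin θ cos θ Δ/(1 + k sin² θ)`, which vanishes at both ends of the interval.
-/

open Real

/-- Complete elliptic integral of the first kind. -/
noncomputable def completeEllipticK (k : ℝ) : ℝ :=
  ∫ θ in (0:ℝ)..(π/2), 1 / Real.sqrt (1 - k^2 * Real.sin θ ^ 2)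

/-- Complete elliptic integral of the second kind. -/
noncomputable def completeEllipticE (k : ℝ) : ℝ :=
  ∫ θ in (0:ℝ)..(π/2), Real.sqrt (1 - k^2 * Real.sin θ ^ 2)

open Set intervalIntegral
open MeasureTheory (volume)

noncomputable def ellipticDelta (k θ : ℝ) : ℝ := √(1 - k ^ 2 * sin θ ^ 2)

noncomputable def landenSin (k θ : ℝ) : ℝ := (1 + k) * sin θ / (1 + k * sin θ ^ 2)

noncomputable def landenAngle (k θ : ℝ) : ℝ := arcsin (landenSin k θ)

noncomputable def landenAngleDeriv (k θ : ℝ) : ℝ :=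
  (1 + k) * (1 - k * sin θ ^ 2) / ((1 + k * sin θ ^ 2) * ellipticDelta k θ)

noncomputable def landenIntegrand (k θ : ℝ) : ℝ :=
  (1 + k) * (1 - k * sin θ ^ 2) ^ 2 / ((1 + k * sin θ ^ 2) ^ 2 * ellipticDelta k θ)

noncomputable def landenCorrection (k θ : ℝ) : ℝ :=
  2 * k * sin θ * cos θ * ellipticDelta k θ / (1 + k * sin θ ^ 2)

section

variable {k : ℝ}

lemma one_sub_sq_mul_sin_sq_pos (hk : k ^ 2 < 1) (θ : ℝ) : 0 < 1 - k ^ 2 * sin θ ^ 2 := by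
  nlinarith [sin_sq_le_one θ, sq_nonneg k]

lemma ellipticDelta_pos (hk : k ^ 2 < 1) (θ : ℝ) : 0 < ellipticDelta k θ :=
  sqrt_pos.2 (one_sub_sq_mul_sin_sq_pos hk θ)

lemma ellipticDelta_sq (hk : k ^ 2 < 1) (θ : ℝ) :
    ellipticDelta k θ ^ 2 = 1 - k ^ 2 * sin θ ^ 2 :=
  sq_sqrt (one_sub_sq_mul_sin_sq_pos hk θ).le

lemma continuous_ellipticDelta : Continuous (ellipticDelta k) := by
  unfold ellipticDelta
  fun_prop

lemma hasDerivAt_ellipticDelta (hk : k ^ 2 < 1) (θ : ℝ) :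
    HasDerivAt (ellipticDelta k) (-(k ^ 2 * sin θ * cos θ) / ellipticDelta k θ) θ := by
  have h : HasDerivAt (ellipticDelta k) _ θ :=
    ((((hasDerivAt_sin θ).fun_pow 2).const_mul (k ^ 2)).const_sub 1).sqrt
      (one_sub_sq_mul_sin_sq_pos hk θ).ne'
  refine h.congr_deriv ?_
  simp only [ellipticDelta]
  norm_num
  ring

lemma integral_ellipticDelta :
    ∫ θ in (0 : ℝ)..π / 2, ellipticDelta k θ = completeEllipticE k := rfl

lemma integral_one_div_ellipticDelta :
    ∫ θ in (0 : ℝ)..π / 2, 1 / ellipticDelta k θ = completeEllipticK k := rfl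

lemma one_add_mul_sin_sq_pos (hk : 0 ≤ k) (θ : ℝ) : 0 < 1 + k * sin θ ^ 2 := by positivity

lemma hasDerivAt_one_add_mul_sin_sq (θ : ℝ) :
    HasDerivAt (fun θ ↦ 1 + k * sin θ ^ 2) (2 * k * sin θ * cos θ) θ := by
  refine ((((hasDerivAt_sin θ).fun_pow 2).const_mul k).const_add 1).congr_deriv ?_
  norm_num
  ring

lemma one_sub_landenSin_sq (hk : 0 ≤ k) (θ : ℝ) :
    1 - landenSin k θ ^ 2 = cos θ ^ 2 * (1 - k ^ 2 * sin θ ^ 2) / (1 + k * sin θ ^ 2) ^ 2 := by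
  have := (one_add_mul_sin_sq_pos hk θ).ne'
  rw [landenSin, cos_sq']
  field_simp
  ring

lemma one_sub_landenModulus_sq_mul_landenSin_sq (hk : 0 ≤ k) (θ : ℝ) :
    1 - (2 * √k / (1 + k)) ^ 2 * landenSin k θ ^ 2
      = ((1 - k * sin θ ^ 2) / (1 + k * sin θ ^ 2)) ^ 2 := by
  have := (one_add_mul_sin_sq_pos hk θ).ne'
  have : 1 + k ≠ 0 := by positivity
  rw [landenSin, div_pow, mul_pow, sq_sqrt hk]
  field_simp
  ring

lemma sin_landenAngle (hk0 : 0 ≤ k) (hk1 : k < 1) (θ : ℝ) :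
    sin (landenAngle k θ) = landenSin k θ := by
  have hsq : landenSin k θ ^ 2 ≤ 1 := by
    have := one_sub_sq_mul_sin_sq_pos (k := k) (by nlinarith) θ
    have : 0 ≤ 1 - landenSin k θ ^ 2 := by
      rw [one_sub_landenSin_sq hk0]
      positivity
    linarith
  obtain ⟨hlow, hhigh⟩ := abs_le.1 ((sq_le_one_iff_abs_le_one _).1 hsq)
  exact sin_arcsin hlow hhigh

lemma landenAngle_zero : landenAngle k 0 = 0 := by simp [landenAngle, landenSin]

lemma landenAngle_pi_div_two (hk : 0 ≤ k) : landenAngle k (π / 2) = π / 2 := by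
  have : 1 + k ≠ 0 := by positivity
  simp [landenAngle, landenSin, this]

lemma continuous_landenAngle (hk : 0 ≤ k) : Continuous (landenAngle k) :=
  continuous_arcsin.comp <| Continuous.div (by fun_prop) (by fun_prop)
    fun θ ↦ (one_add_mul_sin_sq_pos hk θ).ne'

lemma hasDerivAt_landenSin (hk : 0 ≤ k) (θ : ℝ) :
    HasDerivAt (landenSin k)
      ((1 + k) * cos θ * (1 - k * sin θ ^ 2) / (1 + k * sin θ ^ 2) ^ 2) θ := by
  refine (((hasDerivAt_sin θ).const_mul (1 + k)).div (hasDerivAt_one_add_mul_sin_sq θ)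
    (one_add_mul_sin_sq_pos hk θ).ne').congr_deriv ?_
  field_simp
  ring

lemma hasDerivAt_landenAngle (hk0 : 0 ≤ k) (hk1 : k < 1) {θ : ℝ} (hθ : 0 < cos θ) :
    HasDerivAt (landenAngle k) (landenAngleDeriv k θ) θ := by
  have hk : k ^ 2 < 1 := by nlinarith
  have hP := one_add_mul_sin_sq_pos hk0 θ
  have hΔ := ellipticDelta_pos hk θ
  have hroot : √(1 - landenSin k θ ^ 2) = cos θ * ellipticDelta k θ / (1 + k * sin θ ^ 2) := by
    rw [one_sub_landenSin_sq hk0, ← ellipticDelta_sq hk, ← mul_pow, ← div_pow,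
      sqrt_sq (by positivity)]
  have hlt : landenSin k θ ^ 2 < 1 := by
    have : 0 < cos θ ^ 2 * (1 - k ^ 2 * sin θ ^ 2) / (1 + k * sin θ ^ 2) ^ 2 := by
      have := one_sub_sq_mul_sin_sq_pos hk θ
      positivity
    linarith [one_sub_landenSin_sq hk0 θ]
  have hne_neg : landenSin k θ ≠ -1 := by rintro h; norm_num [h] at hlt
  have hne_pos : landenSin k θ ≠ 1 := by rintro h; norm_num [h] at hlt
  refine ((hasDerivAt_arcsin hne_neg hne_pos).comp θ (hasDerivAt_landenSin hk0 θ)).congr_deriv ?_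
  rw [hroot, landenAngleDeriv]
  field_simp

lemma pullback_eq_landenIntegrand (hk0 : 0 ≤ k) (hk1 : k < 1) (θ : ℝ) :
    √(1 - (2 * √k / (1 + k)) ^ 2 * sin (landenAngle k θ) ^ 2) * landenAngleDeriv k θ
      = landenIntegrand k θ := by
  have : 0 ≤ 1 - k * sin θ ^ 2 := by nlinarith [sin_sq_le_one θ]
  rw [sin_landenAngle hk0 hk1, one_sub_landenModulus_sq_mul_landenSin_sq hk0,
    sqrt_sq (div_nonneg this (one_add_mul_sin_sq_pos hk0 θ).le), landenAngleDeriv, landenIntegrand,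
    div_mul_div_comm]
  ring

lemma continuous_landenAngleDeriv (hk0 : 0 ≤ k) (hk1 : k < 1) :
    Continuous (landenAngleDeriv k) :=
  Continuous.div (by fun_prop) ((by fun_prop : Continuous fun θ ↦ 1 + k * sin θ ^ 2).mul
    continuous_ellipticDelta) fun θ ↦ mul_ne_zero (one_add_mul_sin_sq_pos hk0 θ).ne'
      (ellipticDelta_pos (by nlinarith) θ).ne'

lemma continuous_landenIntegrand (hk0 : 0 ≤ k) (hk1 : k < 1) : Continuous (landenIntegrand k) :=
  Continuous.div (by fun_prop) ((by fun_prop : Continuous fun θ ↦ (1 + k * sin θ ^ 2) ^ 2).mul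
    continuous_ellipticDelta) fun θ ↦ mul_ne_zero (pow_ne_zero 2 (one_add_mul_sin_sq_pos hk0 θ).ne')
      (ellipticDelta_pos (by nlinarith) θ).ne'

lemma integral_landenIntegrand (hk0 : 0 ≤ k) (hk1 : k < 1) :
    ∫ θ in (0 : ℝ)..π / 2, landenIntegrand k θ = completeEllipticE (2 * √k / (1 + k)) := by
  have hk : k ^ 2 < 1 := by nlinarith
  have hderiv : ∀ θ ∈ Ioo (min 0 (π / 2)) (max 0 (π / 2)),
      HasDerivWithinAt (landenAngle k) (landenAngleDeriv k θ) (Ioi θ) θ := by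
    intro θ hθ
    rw [min_eq_left (by positivity), max_eq_right (by positivity)] at hθ
    exact (hasDerivAt_landenAngle hk0 hk1
      (cos_pos_of_mem_Ioo ⟨by linarith [hθ.1, pi_pos], hθ.2⟩)).hasDerivWithinAt
  have hsubst := integral_comp_mul_deriv'' (continuous_landenAngle hk0).continuousOn hderiv
    (continuous_landenAngleDeriv hk0 hk1).continuousOn
    (g := fun ψ ↦ √(1 - (2 * √k / (1 + k)) ^ 2 * sin ψ ^ 2)) (by fun_prop)
  rw [landenAngle_zero, landenAngle_pi_div_two hk0] at hsubst
  rw [completeEllipticE, ← hsubst]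
  exact integral_congr fun θ _ ↦ (pullback_eq_landenIntegrand hk0 hk1 θ).symm

lemma hasDerivAt_landenCorrection (hk0 : 0 ≤ k) (hk1 : k < 1) (θ : ℝ) :
    HasDerivAt (landenCorrection k) ((1 + k) * landenIntegrand k θ - 2 * ellipticDelta k θ
      + (1 - k ^ 2) / ellipticDelta k θ) θ := by
  have hk : k ^ 2 < 1 := by nlinarith
  have h : HasDerivAt (landenCorrection k) _ θ :=
    ((((hasDerivAt_sin θ).const_mul (2 * k)).mul (hasDerivAt_cos θ)).mul
      (hasDerivAt_ellipticDelta hk θ)).div (hasDerivAt_one_add_mul_sin_sq θ)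
      (one_add_mul_sin_sq_pos hk0 θ).ne'
  refine h.congr_deriv ?_
  have := (ellipticDelta_pos hk θ).ne'
  have := (one_add_mul_sin_sq_pos hk0 θ).ne'
  simp only [landenIntegrand, Pi.mul_apply]
  field_simp
  rw [ellipticDelta_sq hk, cos_sq']
  ring

theorem completeEllipticE_landen (hk0 : 0 ≤ k) (hk1 : k < 1) :
    (1 + k) * completeEllipticE (2 * √k / (1 + k))
      = 2 * completeEllipticE k - (1 - k ^ 2) * completeEllipticK k := by
  have hk : k ^ 2 < 1 := by nlinarith
  have hF : IntervalIntegrable (landenIntegrand k) volume 0 (π / 2) :=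
    (continuous_landenIntegrand hk0 hk1).intervalIntegrable _ _
  have hΔ : IntervalIntegrable (ellipticDelta k) volume 0 (π / 2) :=
    continuous_ellipticDelta.intervalIntegrable _ _
  have hΔinv : IntervalIntegrable (fun θ ↦ (1 - k ^ 2) / ellipticDelta k θ) volume 0 (π / 2) :=
    (continuous_const.div continuous_ellipticDelta
      fun θ ↦ (ellipticDelta_pos hk θ).ne').intervalIntegrable _ _
  have hK : ∫ θ in (0 : ℝ)..π / 2, (1 - k ^ 2) / ellipticDelta k θ
      = (1 - k ^ 2) * completeEllipticK k := by
    simp_rw [div_eq_mul_one_div (1 - k ^ 2)]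
    rw [integral_const_mul, integral_one_div_ellipticDelta]
  have hcorr := integral_eq_sub_of_hasDerivAt
    (fun θ _ ↦ hasDerivAt_landenCorrection hk0 hk1 θ)
    (((hF.const_mul _).sub (hΔ.const_mul _)).add hΔinv)
  rw [integral_add ((hF.const_mul _).sub (hΔ.const_mul _)) hΔinv,
    integral_sub (hF.const_mul _) (hΔ.const_mul _), integral_const_mul, integral_const_mul,
    integral_landenIntegrand hk0 hk1, integral_ellipticDelta, hK] at hcorr
  simp only [landenCorrection, cos_pi_div_two, sin_zero, mul_zero, zero_mul, zero_div,
    sub_zero] at hcorr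
  linarith

end

/-- For `0 < a < c`, `(4π/c)(2c²E(a/c) − (c²−a²)K(a/c)) = 4π(a+c)E(2√(ac)/(a+c))`:
the area `S(0,a,c)` of the generalized Lawson surface `T_{a,0,c}` agrees with the
area of the corresponding bipolar Lawson surface. -/
theorem area_T_a_zero_c (a c : ℝ) (ha : 0 < a) (hac : a < c) :
    4 * π / c * (2 * c^2 * completeEllipticE (a / c)
        - (c^2 - a^2) * completeEllipticK (a / c)) =
      4 * π * (a + c) * completeEllipticE (2 * Real.sqrt (a * c) / (a + c)) := by
  have hc : 0 < c := ha.trans hac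
  obtain ⟨k, rfl⟩ : ∃ k, a = k * c := ⟨a / c, (div_mul_cancel₀ a hc.ne').symm⟩
  have hk0 : 0 ≤ k := (pos_of_mul_pos_left ha hc.le).le
  have hk1 : k < 1 := by nlinarith
  have hmodulus : 2 * √(k * c * c) / (k * c + c) = 2 * √k / (1 + k) := by
    rw [mul_assoc, sqrt_mul hk0, sqrt_mul_self hc.le]
    field_simp
    ring
  rw [mul_div_cancel_right₀ k hc.ne', hmodulus]
  calc 4 * π / c * (2 * c ^ 2 * completeEllipticE k - (c ^ 2 - (k * c) ^ 2) * completeEllipticK k)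
      = 4 * π * c * (2 * completeEllipticE k - (1 - k ^ 2) * completeEllipticK k) := by
        field_simp
    _ = 4 * π * (k * c + c) * completeEllipticE (2 * √k / (1 + k)) := by
        rw [← completeEllipticE_landen hk0 hk1]
        ring
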